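/- Let p be an odd prime, let n ≥ 1, set k = 2n, and let χ be a primitive Dirichlet character of conductor p^k. Let ℓ be an integer such that χ(1 + p^n x) = e_{p^n}(ℓ x) for all integers x. Then for every integer t₀ with t₀ ≡ −ℓ (mod p^n), one has τ(χ) = p^n · χ(t₀) · e_{p^k}(t₀); in particular the value χ(t₀) e_{p^k}(t₀) is the same for all such t₀. -/

import Mathlib

/-!
Put `M = p ^ n`, so that the modulus is `M ^ 2`, and write `t = s + M b` with `0 ≤ s, b < M`.
If `s` is invertible modulo `M`, with inverse `c`, then `s + M b ≡ s (1 + M c b) (mod M ^ 2)`,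
so the summand at `s + M b` is the summand at `s` times `e_M((ℓ c + 1) b)`. Summing over `b`
kills every `s` except the one with `s ≡ -ℓ (mod M)`; there `ℓ c + 1 ≡ 0`, so the summand is
constant on the whole residue class `-ℓ + M ℤ`. For `s` not invertible all summands vanish.
-/

open Complex

/-- `eN q x = e^{2πix/q}`. -/
noncomputable def eN (q : ℕ) (x : ℤ) : ℂ := Complex.exp (2 * Real.pi * Complex.I * x / q)

open Finset

lemma eN_eq_zpow (q : ℕ) (x : ℤ) : eN q x = exp (2 * Real.pi * I / q) ^ x := by
  rw [← exp_int_mul, eN]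
  ring_nf

lemma eN_add (q : ℕ) (x y : ℤ) : eN q (x + y) = eN q x * eN q y := by
  simp only [eN_eq_zpow, zpow_add₀ (exp_ne_zero _)]

lemma eN_eq_one_iff {q : ℕ} (hq : q ≠ 0) (x : ℤ) : eN q x = 1 ↔ (q : ℤ) ∣ x := by
  rw [eN_eq_zpow]
  exact (isPrimitiveRoot_exp q hq).zpow_eq_one_iff_dvd x

lemma eN_mul_mul_left {a : ℕ} (ha : a ≠ 0) (b : ℕ) (x : ℤ) : eN (a * b) (a * x) = eN b x := by
  simp only [eN]
  congr 1
  push_cast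
  field_simp

lemma sum_range_eN_mul {M : ℕ} (hM : M ≠ 0) (d : ℤ) :
    ∑ b ∈ range M, eN M (d * b) = if (M : ℤ) ∣ d then (M : ℂ) else 0 := by
  have hpow (b : ℕ) : eN M (d * b) = eN M d ^ b := by
    rw [eN_eq_zpow, eN_eq_zpow, zpow_mul, zpow_natCast]
  simp_rw [hpow]
  split_ifs with hd
  · simp [(eN_eq_one_iff hM d).mpr hd]
  · have hroot : eN M d ^ M = 1 := by
      rw [← hpow, eN_eq_one_iff hM]
      exact dvd_mul_left _ _
    rw [geom_sum_eq (mt (eN_eq_one_iff hM d).mp hd), hroot, sub_self, zero_div]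

lemma ZMod.sum_val_eq_sum_range {α : Type*} [AddCommMonoid α] (N : ℕ) [NeZero N] (F : ℕ → α) :
    ∑ t : ZMod N, F t.val = ∑ m ∈ range N, F m := by
  obtain ⟨k, rfl⟩ := Nat.exists_eq_succ_of_ne_zero (NeZero.ne N)
  exact Fin.sum_univ_eq_sum_range F (k + 1)

lemma Finset.sum_range_mul_eq_sum_sum {α : Type*} [AddCommMonoid α] (M K : ℕ) (F : ℕ → α) :
    ∑ m ∈ range (M * K), F m = ∑ a ∈ range M, ∑ b ∈ range K, F (a + M * b) := by
  induction K with
  | zero => simp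
  | succ K ih =>
    rw [Nat.mul_succ, sum_range_add, ih, ← sum_add_distrib]
    exact sum_congr rfl fun a _ ↦ by rw [sum_range_succ, add_comm (M * K)]

lemma exists_mul_modEq_one_of_isUnit {M : ℕ} {s : ℤ} (hs : IsUnit (s : ZMod M)) :
    ∃ c : ℤ, s * c ≡ 1 [ZMOD M] := by
  obtain ⟨u, hu⟩ := hs
  refine ⟨((u⁻¹ : (ZMod M)ˣ) : ZMod M).cast, ?_⟩
  rw [← ZMod.intCast_eq_intCast_iff]
  push_cast [ZMod.intCast_zmod_cast, ← hu]
  exact u.mul_inv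

lemma dvd_mul_add_one_iff {M : ℕ} {s c ℓ : ℤ} (hsc : s * c ≡ 1 [ZMOD M]) :
    (M : ℤ) ∣ ℓ * c + 1 ↔ s ≡ -ℓ [ZMOD M] := by
  rw [← ZMod.intCast_eq_intCast_iff] at hsc ⊢
  rw [← ZMod.intCast_zmod_eq_zero_iff_dvd]
  push_cast at hsc ⊢
  constructor <;> intro h
  · linear_combination s * h - ℓ * hsc
  · linear_combination c * h - hsc

lemma DirichletCharacter.map_intCast_eq_zero_of_not_isUnit {R : Type*} [CommMonoidWithZero R]
    {M N : ℕ} (χ : DirichletCharacter R N) (hMN : M ∣ N) {t : ℤ} (ht : ¬IsUnit (t : ZMod M)) :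
    χ t = 0 :=
  χ.map_nonunit fun hu ↦ ht (by simpa using hu.map (ZMod.castHom hMN (ZMod M)))

noncomputable def gaussTerm {N : ℕ} (χ : DirichletCharacter ℂ N) (t : ℤ) : ℂ := χ t * eN N t

section SquareModulus

variable {N M : ℕ} (χ : DirichletCharacter ℂ N) {ℓ : ℤ}

lemma gaussTerm_eq_zero_of_not_isUnit (hMN : M ∣ N) {t : ℤ} (ht : ¬IsUnit (t : ZMod M)) :
    gaussTerm χ t = 0 := by
  rw [gaussTerm, χ.map_intCast_eq_zero_of_not_isUnit hMN ht, zero_mul]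

lemma gaussTerm_add_mul [NeZero M] (hN : N = M * M)
    (hℓ : ∀ x : ℤ, χ ((1 + M * x : ℤ) : ZMod N) = eN M (ℓ * x))
    {s c : ℤ} (hsc : s * c ≡ 1 [ZMOD M]) (b : ℤ) :
    gaussTerm χ (s + M * b) = gaussTerm χ s * eN M ((ℓ * c + 1) * b) := by
  subst hN
  have hfactor : s * (1 + M * (c * b)) ≡ s + M * b [ZMOD (M * M : ℕ)] := by
    have := ((hsc.mul_left' (c := M)).mul_right b).add_left s
    push_cast
    convert this using 1 <;> ring
  have hχ : χ ((s + M * b : ℤ) : ZMod (M * M)) = χ s * eN M (ℓ * (c * b)) := by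
    rw [← (ZMod.intCast_eq_intCast_iff _ _ _).mpr hfactor, Int.cast_mul, map_mul, hℓ]
  have he : eN (M * M) (s + M * b) = eN (M * M) s * eN M b := by
    rw [eN_add, eN_mul_mul_left (NeZero.ne M)]
  rw [gaussTerm, gaussTerm, hχ, he, add_mul, eN_add, mul_assoc ℓ, one_mul]
  ring

lemma gaussTerm_add_mul_of_modEq [NeZero M] (hN : N = M * M)
    (hℓ : ∀ x : ℤ, χ ((1 + M * x : ℤ) : ZMod N) = eN M (ℓ * x))
    {s : ℤ} (hs : s ≡ -ℓ [ZMOD M]) (b : ℤ) :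
    gaussTerm χ (s + M * b) = gaussTerm χ s := by
  by_cases hu : IsUnit (s : ZMod M)
  · obtain ⟨c, hsc⟩ := exists_mul_modEq_one_of_isUnit hu
    obtain ⟨k, hk⟩ := (dvd_mul_add_one_iff hsc).mpr hs
    rw [gaussTerm_add_mul χ hN hℓ hsc, hk, mul_assoc,
      (eN_eq_one_iff (NeZero.ne M) _).mpr (dvd_mul_right _ _), mul_one]
  · have hMN : M ∣ N := hN ▸ dvd_mul_left M M
    rw [gaussTerm_eq_zero_of_not_isUnit χ hMN hu,
      gaussTerm_eq_zero_of_not_isUnit χ hMN (by simpa using hu)]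

lemma sum_range_gaussTerm_add_mul [NeZero M] (hN : N = M * M)
    (hℓ : ∀ x : ℤ, χ ((1 + M * x : ℤ) : ZMod N) = eN M (ℓ * x)) (s : ℤ) :
    ∑ b ∈ range M, gaussTerm χ (s + M * b) =
      if s ≡ -ℓ [ZMOD M] then M * gaussTerm χ s else 0 := by
  split_ifs with hs
  · simp [gaussTerm_add_mul_of_modEq χ hN hℓ hs]
  by_cases hu : IsUnit (s : ZMod M)
  · obtain ⟨c, hsc⟩ := exists_mul_modEq_one_of_isUnit hu
    simp_rw [gaussTerm_add_mul χ hN hℓ hsc, ← mul_sum, sum_range_eN_mul (NeZero.ne M),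
      if_neg (mt (dvd_mul_add_one_iff hsc).mp hs), mul_zero]
  · have hMN : M ∣ N := hN ▸ dvd_mul_left M M
    exact sum_eq_zero fun b _ ↦ gaussTerm_eq_zero_of_not_isUnit χ hMN (by simpa using hu)

theorem sum_mul_eN_eq_mul_gaussTerm [NeZero N] (hN : N = M * M)
    (hℓ : ∀ x : ℤ, χ ((1 + M * x : ℤ) : ZMod N) = eN M (ℓ * x))
    {t₀ : ℤ} (ht₀ : t₀ ≡ -ℓ [ZMOD M]) :
    ∑ t : ZMod N, χ t * eN N t.val = M * gaussTerm χ t₀ := by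
  have : NeZero M := ⟨by rintro rfl; exact NeZero.ne N hN⟩
  set a₀ := (t₀ : ZMod M).val
  have ha₀ : (a₀ : ℤ) ≡ t₀ [ZMOD M] := by
    rw [← ZMod.intCast_eq_intCast_iff]
    simp [a₀]
  calc ∑ t : ZMod N, χ t * eN N t.val = ∑ m ∈ range N, gaussTerm χ m := by
        rw [← ZMod.sum_val_eq_sum_range]
        simp [gaussTerm]
    _ = ∑ a ∈ range M, ∑ b ∈ range M, gaussTerm χ (a + M * b) := by
        subst hN
        rw [sum_range_mul_eq_sum_sum]
        push_cast
        rfl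
    _ = ∑ a ∈ range M, if (a : ℤ) ≡ -ℓ [ZMOD M] then M * gaussTerm χ a else 0 :=
        sum_congr rfl fun a _ ↦ sum_range_gaussTerm_add_mul χ hN hℓ a
    _ = M * gaussTerm χ a₀ := by
        refine (sum_eq_single_of_mem a₀ (mem_range.mpr (ZMod.val_lt _)) fun a ha hne ↦ ?_).trans
          (if_pos (ha₀.trans ht₀))
        refine if_neg fun ha' ↦ hne ?_
        have hcast : ((a : ℤ) : ZMod M) = t₀ :=
          (ZMod.intCast_eq_intCast_iff _ _ _).mpr (ha'.trans ht₀.symm)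
        simp [a₀, ← hcast, ZMod.val_natCast_of_lt (mem_range.mp ha)]
    _ = M * gaussTerm χ t₀ := by
        obtain ⟨b, hb⟩ := ha₀.dvd
        rw [show t₀ = a₀ + M * b by linarith, gaussTerm_add_mul_of_modEq χ hN hℓ (ha₀.trans ht₀)]

end SquareModulus

theorem gauss_sum_eval_even_exponent_general (p n : ℕ) (hp : p.Prime)
    (χ : DirichletCharacter ℂ (p ^ (2 * n))) (ℓ : ℤ)
    (hℓ : ∀ x : ℤ, χ ((1 + p ^ n * x : ℤ) : ZMod (p ^ (2 * n))) = eN (p ^ n) (ℓ * x)) :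
    ∀ t₀ : ℤ, t₀ ≡ -ℓ [ZMOD (p ^ n : ℕ)] →
      haveI : NeZero (p ^ (2 * n)) := ⟨pow_ne_zero _ hp.ne_zero⟩
      (∑ t : ZMod (p ^ (2 * n)), χ t * eN (p ^ (2 * n)) (t.val : ℤ)) =
        (p : ℂ) ^ n * χ ((t₀ : ℤ) : ZMod (p ^ (2 * n))) * eN (p ^ (2 * n)) t₀ := by
  intro t₀ ht₀
  have : NeZero (p ^ (2 * n)) := ⟨pow_ne_zero _ hp.ne_zero⟩
  rw [sum_mul_eN_eq_mul_gaussTerm χ (M := p ^ n) (by rw [two_mul, pow_add])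
    (by exact_mod_cast hℓ) ht₀, gaussTerm]
  push_cast
  ring

/-- Evaluation of the Gauss sum of a primitive character of even prime power conductor. -/
theorem gauss_sum_eval_even_exponent (p n : ℕ) (hp : p.Prime) (hodd : Odd p) (hn : 1 ≤ n)
    (χ : DirichletCharacter ℂ (p ^ (2 * n))) (hχ : χ.IsPrimitive) (ℓ : ℤ)
    (hℓ : ∀ x : ℤ, χ ((1 + p ^ n * x : ℤ) : ZMod (p ^ (2 * n))) = eN (p ^ n) (ℓ * x)) :
    ∀ t₀ : ℤ, t₀ ≡ -ℓ [ZMOD (p ^ n : ℕ)] →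
      haveI : NeZero (p ^ (2 * n)) := ⟨pow_ne_zero _ hp.ne_zero⟩
      (∑ t : ZMod (p ^ (2 * n)), χ t * eN (p ^ (2 * n)) (t.val : ℤ)) =
        (p : ℂ) ^ n * χ ((t₀ : ℤ) : ZMod (p ^ (2 * n))) * eN (p ^ (2 * n)) t₀ :=
  gauss_sum_eval_even_exponent_general p n hp χ ℓ hℓ
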